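/- For every n ≥ 1, the following identity holds in the polynomial ring ℤ[x,y,s]: A_{n+1}(x,y,s) = (s+y)·A_n(x,y,s) + x·y·(∂/∂x + ∂/∂y + ∂/∂s) A_n(x,y,s). -/

import Mathlib

/-!
Give an adjacent pair of letters the weight `y` if it is a descent, `s` if it is a succession and
`x` if it is a big ascent, so that the term of a permutation in `A_n` is the product of the
weights of its adjacent pairs. Every permutation of `[n+1]` arises exactly once by inserting
`n+1` into one of the `n+1` gaps of a permutation `π` of `[n]`. In front this multiplies the
weight of `π` by `y`, at the end by the weight of `(π(n), n+1)`, and between adjacent letters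
`a, b` it replaces the weight of `(a, b)` by `xy` if `a ≠ n` and by `sy` if `a = n`.

On the other side, `xy(∂ₓ + ∂_y + ∂ₛ)` is the derivation sending each of `x, y, s` to `xy`, so it
maps a product of pair weights to the sum over the pairs of the product with that pair's weight
replaced by `xy`. The two sums differ only through the letter `n`. If it is last, the end gap
contributes `s` times the weight of `π`; otherwise the pair `(n, b)` is a descent, whose gap
contributes `s` instead of `x` times the weight of `π`, while the end gap contributes `x` times it.
-/

open Finset MvPolynomial

/-- The word `π(1)π(2)⋯π(n)` of a permutation, as a function on 0-based positions. -/
def permWord {n : ℕ} (π : Equiv.Perm (Fin n)) (i : ℕ) : ℕ :=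
  if h : i < n then ((π ⟨i, h⟩ : Fin n) : ℕ) + 1 else 0

/-- Number of descents. -/
def desNum {n : ℕ} (π : Equiv.Perm (Fin n)) : ℕ :=
  ((range (n - 1)).filter fun i => permWord π (i + 1) < permWord π i).card

/-- Number of big ascents. -/
def bascNum {n : ℕ} (π : Equiv.Perm (Fin n)) : ℕ :=
  ((range (n - 1)).filter fun i => permWord π i + 2 ≤ permWord π (i + 1)).card

/-- Number of successions. -/
def sucNum {n : ℕ} (π : Equiv.Perm (Fin n)) : ℕ :=
  ((range (n - 1)).filter fun i => permWord π (i + 1) = permWord π i + 1).card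

/-- The trivariate Eulerian polynomial `A_n(x,y,s) ∈ ℤ[x,y,s]`, with
`x = X 0`, `y = X 1`, `s = X 2`. -/
noncomputable def trivEuler (n : ℕ) : MvPolynomial (Fin 3) ℤ :=
  ∑ π : Equiv.Perm (Fin n), X 0 ^ bascNum π * X 1 ^ desNum π * X 2 ^ sucNum π

noncomputable def pairWeight (a b : ℕ) : MvPolynomial (Fin 3) ℤ :=
  if b < a then X 1 else if b = a + 1 then X 2 else X 0

-- `m` counts adjacent pairs: the word is `w 0, …, w m`.
noncomputable def wordWeight (w : ℕ → ℕ) (m : ℕ) : MvPolynomial (Fin 3) ℤ :=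
  ∏ i ∈ range m, pairWeight (w i) (w (i + 1))

theorem wordWeight_eq_monomial {w : ℕ → ℕ} {m : ℕ} (hw : ∀ i < m, w (i + 1) ≠ w i) :
    wordWeight w m =
      X 0 ^ #{i ∈ range m | w i + 2 ≤ w (i + 1)} * X 1 ^ #{i ∈ range m | w (i + 1) < w i} *
        X 2 ^ #{i ∈ range m | w (i + 1) = w i + 1} := by
  simp only [wordWeight, pairWeight, prod_ite, prod_const, filter_filter]
  rw [filter_congr (p := fun i => ¬w (i + 1) < w i ∧ w (i + 1) = w i + 1)
      (q := fun i => w (i + 1) = w i + 1) (fun i _ => by omega),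
    filter_congr (p := fun i => ¬w (i + 1) < w i ∧ ¬w (i + 1) = w i + 1)
      (q := fun i => w i + 2 ≤ w (i + 1)) (fun i hi => by have := hw i (mem_range.1 hi); omega)]
  ring

section permWord

variable {n : ℕ} (π : Equiv.Perm (Fin n))

theorem permWord_of_lt {i : ℕ} (hi : i < n) : permWord π i = π ⟨i, hi⟩ + 1 :=
  dif_pos hi

theorem permWord_le (i : ℕ) : permWord π i ≤ n := by
  unfold permWord
  split_ifs
  exacts [(π _).isLt, n.zero_le]

theorem permWord_inj {i k : ℕ} (hi : i < n) (hk : k < n) (h : permWord π i = permWord π k) :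
    i = k := by
  rw [permWord_of_lt π hi, permWord_of_lt π hk, add_left_inj, Fin.val_inj,
    π.injective.eq_iff, Fin.mk.injEq] at h
  exact h

end permWord

theorem permWord_symm_last {m : ℕ} (π : Equiv.Perm (Fin (m + 1))) :
    permWord π (π.symm (Fin.last m)) = m + 1 := by
  simp [permWord_of_lt π (π.symm (Fin.last m)).isLt]

theorem trivEuler_eq_sum_wordWeight (n : ℕ) :
    trivEuler n = ∑ π : Equiv.Perm (Fin n), wordWeight (permWord π) (n - 1) := by
  refine sum_congr rfl fun π _ => (wordWeight_eq_monomial fun i hi h => ?_).symm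
  exact absurd (permWord_inj π (by omega) (by omega) h) (by omega)

theorem Derivation.leibniz_prod {ι R A M : Type*} [CommSemiring R] [CommSemiring A]
    [AddCommMonoid M] [Algebra R A] [Module A M] [Module R M] [DecidableEq ι]
    (D : Derivation R A M) (s : Finset ι) (f : ι → A) :
    D (∏ i ∈ s, f i) = ∑ i ∈ s, (∏ j ∈ s.erase i, f j) • D (f i) := by
  induction s using Finset.induction_on with
  | empty => simp
  | insert a s ha ih =>
    rw [prod_insert ha, D.leibniz, ih, sum_insert ha, erase_insert ha, smul_sum, add_comm]
    congr 1
    refine sum_congr rfl fun i hi => ?_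
    rw [erase_insert_of_ne (ne_of_mem_of_not_mem hi ha).symm,
      prod_insert fun h => ha (mem_of_mem_erase h), mul_smul]

noncomputable def xyDerivation : Derivation ℤ (MvPolynomial (Fin 3) ℤ) (MvPolynomial (Fin 3) ℤ) :=
  (X 0 * X 1 : MvPolynomial (Fin 3) ℤ) • (pderiv 0 + pderiv 1 + pderiv 2)

theorem xyDerivation_apply (p : MvPolynomial (Fin 3) ℤ) :
    xyDerivation p = X 0 * X 1 * (pderiv 0 p + pderiv 1 p + pderiv 2 p) :=
  rfl

theorem xyDerivation_X (i : Fin 3) : xyDerivation (X i) = X 0 * X 1 := by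
  fin_cases i <;> simp [xyDerivation_apply, pderiv_X]

theorem xyDerivation_pairWeight (a b : ℕ) : xyDerivation (pairWeight a b) = X 0 * X 1 := by
  unfold pairWeight
  split_ifs <;> exact xyDerivation_X _

theorem xyDerivation_wordWeight (w : ℕ → ℕ) (m : ℕ) :
    xyDerivation (wordWeight w m) =
      ∑ i ∈ range m, X 0 * X 1 * ∏ k ∈ (range m).erase i, pairWeight (w k) (w (k + 1)) := by
  simp only [wordWeight, Derivation.leibniz_prod, xyDerivation_pairWeight, smul_eq_mul, mul_comm]

theorem pairWeight_of_lt {a b : ℕ} (h : b < a) : pairWeight a b = X 1 := if_pos h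

theorem pairWeight_succ (a : ℕ) : pairWeight a (a + 1) = X 2 := by simp [pairWeight]

theorem pairWeight_of_add_two_le {a b : ℕ} (h : a + 2 ≤ b) : pairWeight a b = X 0 := by
  simp [pairWeight, show ¬b < a by omega, show b ≠ a + 1 by omega]

def insertAt (w : ℕ → ℕ) (j c : ℕ) (i : ℕ) : ℕ :=
  if i < j then w i else if i = j then c else w (i - 1)

section insertAt

variable (w : ℕ → ℕ) {i j : ℕ} (c : ℕ)

theorem insertAt_of_lt (h : i < j) : insertAt w j c i = w i := if_pos h

theorem insertAt_self : insertAt w j c j = c := by simp [insertAt]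

theorem insertAt_of_gt (h : j < i) : insertAt w j c i = w (i - 1) := by
  simp [insertAt, h.not_gt, h.ne']

theorem wordWeight_insertAt_zero (m : ℕ) :
    wordWeight (insertAt w 0 c) (m + 1) = pairWeight c (w 0) * wordWeight w m := by
  simp only [wordWeight, prod_range_succ', insertAt_of_gt w c (Nat.succ_pos _), insertAt_self,
    Nat.succ_sub_one, mul_comm]

theorem wordWeight_insertAt_last (m : ℕ) :
    wordWeight (insertAt w (m + 1) c) (m + 1) = wordWeight w m * pairWeight (w m) c := by
  rw [wordWeight, prod_range_succ, insertAt_of_lt w c m.lt_succ_self, insertAt_self]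
  congr 1
  refine prod_congr rfl fun k hk => ?_
  have hk := mem_range.1 hk
  rw [insertAt_of_lt w c (by omega), insertAt_of_lt w c (by omega)]

theorem wordWeight_insertAt_succ {m : ℕ} (hi : i < m) :
    wordWeight (insertAt w (i + 1) c) (m + 1) =
      pairWeight (w i) c * pairWeight c (w (i + 1)) *
        ∏ k ∈ (range m).erase i, pairWeight (w k) (w (k + 1)) := by
  induction m, hi using Nat.le_induction with
  | base =>
    rw [wordWeight, prod_range_succ, prod_range_succ, range_add_one,
      erase_insert notMem_range_self, insertAt_of_lt w c i.lt_succ_self, insertAt_self,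
      insertAt_of_gt w c (by omega : i + 1 < i + 1 + 1), Nat.add_sub_cancel]
    rw [prod_congr rfl fun k hk => by
      rw [insertAt_of_lt w c (by simp at hk; omega), insertAt_of_lt w c (by simp at hk; omega)]]
    ring
  | succ m hm ih =>
    rw [wordWeight, prod_range_succ, ← wordWeight, ih, range_add_one,
      erase_insert_of_ne (by omega), prod_insert (by simp),
      insertAt_of_gt w c (by omega : i + 1 < m + 1),
      insertAt_of_gt w c (by omega : i + 1 < m + 1 + 1), Nat.add_sub_cancel, Nat.add_sub_cancel]
    ring

end insertAt

section insertMax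

variable {n : ℕ}

def insertMax (π : Equiv.Perm (Fin n)) (j : Fin (n + 1)) : Equiv.Perm (Fin (n + 1)) :=
  (finSuccEquiv' j).trans (π.optionCongr.trans (finSuccEquiv' (Fin.last n)).symm)

theorem insertMax_apply_self (π : Equiv.Perm (Fin n)) (j : Fin (n + 1)) :
    insertMax π j j = Fin.last n := by
  simp [insertMax]

theorem insertMax_apply_succAbove (π : Equiv.Perm (Fin n)) (j : Fin (n + 1)) (k : Fin n) :
    insertMax π j (j.succAbove k) = (π k).castSucc := by
  simp [insertMax]

theorem permWord_insertMax (π : Equiv.Perm (Fin n)) (j : Fin (n + 1)) :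
    permWord (insertMax π j) = insertAt (permWord π) j (n + 1) := by
  funext i
  unfold insertAt
  split_ifs with hij hij'
  · have hi : i < n := by omega
    have e : j.succAbove ⟨i, hi⟩ = ⟨i, by omega⟩ := Fin.succAbove_of_castSucc_lt _ _ hij
    rw [permWord_of_lt _ (by omega), permWord_of_lt π hi, ← e, insertMax_apply_succAbove]
    rfl
  · rw [permWord_of_lt _ (by omega), show (⟨i, _⟩ : Fin (n + 1)) = j from Fin.ext hij',
      insertMax_apply_self, Fin.val_last]
  · by_cases hi : i ≤ n
    · have hi' : i - 1 < n := by omega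
      have e : j.succAbove ⟨i - 1, hi'⟩ = ⟨i, by omega⟩ := by
        rw [Fin.succAbove_of_le_castSucc _ _ (Fin.le_def.2 (by simp; omega))]
        ext
        simp
        omega
      rw [permWord_of_lt _ (by omega), permWord_of_lt π hi', ← e, insertMax_apply_succAbove]
      rfl
    · simp [permWord, show ¬i < n + 1 by omega, show ¬i - 1 < n by omega]

theorem insertMax_bijective :
    Function.Bijective fun p : Equiv.Perm (Fin n) × Fin (n + 1) => insertMax p.1 p.2 := by
  refine (Fintype.bijective_iff_injective_and_card _).2 ⟨?_, ?_⟩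
  · rintro ⟨π, j⟩ ⟨π', j'⟩ h
    dsimp only at h
    obtain rfl : j = j' := (insertMax π' j').injective <| by
      rw [← h, insertMax_apply_self, h, insertMax_apply_self]
    refine Prod.ext (Equiv.ext fun k => ?_) rfl
    have := insertMax_apply_succAbove π j k
    rw [h, insertMax_apply_succAbove] at this
    exact (Fin.castSucc_injective n this).symm
  · simp only [Fintype.card_prod, Fintype.card_perm, Fintype.card_fin, Nat.factorial_succ,
      mul_comm]

end insertMax

theorem sum_wordWeight_insertAt {w : ℕ → ℕ} {m p : ℕ} (hw : ∀ k, w k ≤ m + 1) (hp : p ≤ m)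
    (hwp : w p = m + 1) (huniq : ∀ k ≤ m, w k = m + 1 → k = p) :
    ∑ j ∈ range (m + 2), wordWeight (insertAt w j (m + 2)) (m + 1) =
      (X 2 + X 1) * wordWeight w m + xyDerivation (wordWeight w m) := by
  set R := fun i => ∏ k ∈ (range m).erase i, pairWeight (w k) (w (k + 1))
  have htop : ∀ k ≤ m, pairWeight (w k) (m + 2) = if k = p then X 2 else X 0 := by
    intro k hk
    split_ifs with hkp
    · rw [hkp, hwp, pairWeight_succ]
    · exact pairWeight_of_add_two_le (by have := hw k; have := mt (huniq k hk) hkp; omega)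
  have hinner : ∀ i ∈ range m, wordWeight (insertAt w (i + 1) (m + 2)) (m + 1) =
      X 0 * X 1 * R i + if i = p then (X 2 - X 0) * X 1 * R i else 0 := by
    intro i hi
    have hi := mem_range.1 hi
    rw [wordWeight_insertAt_succ w _ hi, htop i hi.le,
      pairWeight_of_lt (by have := hw (i + 1); omega)]
    split_ifs <;> ring
  rw [sum_range_succ, sum_range_succ', sum_congr rfl hinner, sum_add_distrib, sum_ite_eq',
    wordWeight_insertAt_last, wordWeight_insertAt_zero, htop m le_rfl,
    pairWeight_of_lt (by have := hw 0; omega), xyDerivation_wordWeight]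
  rcases hp.lt_or_eq with hp | rfl
  · have hW : wordWeight w m = X 1 * R p := by
      rw [wordWeight, ← mul_prod_erase _ _ (mem_range.2 hp), pairWeight_of_lt]
      have := hw (p + 1)
      have := mt (huniq (p + 1) (by omega)) (by omega)
      omega
    rw [if_pos (mem_range.2 hp), if_neg hp.ne', hW]
    ring
  · rw [if_neg notMem_range_self, if_pos rfl]
    ring

theorem sum_wordWeight_insertMax {m : ℕ} (π : Equiv.Perm (Fin (m + 1))) :
    ∑ j : Fin (m + 2), wordWeight (permWord (insertMax π j)) (m + 1) =
      (X 2 + X 1) * wordWeight (permWord π) m + xyDerivation (wordWeight (permWord π) m) := by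
  simp only [permWord_insertMax]
  rw [Fin.sum_univ_eq_sum_range (fun j => wordWeight (insertAt (permWord π) j (m + 2)) (m + 1))]
  have hp := (π.symm (Fin.last m)).isLt
  exact sum_wordWeight_insertAt (permWord_le π) (by omega) (permWord_symm_last π)
    fun k hk h => permWord_inj π (by omega) hp (h.trans (permWord_symm_last π).symm)

/-- For `n ≥ 1`:
`A_{n+1}(x,y,s) = (s+y)·A_n(x,y,s) + xy(∂/∂x + ∂/∂y + ∂/∂s)A_n(x,y,s)`. -/
theorem stmt3 (n : ℕ) (hn : 1 ≤ n) :
    trivEuler (n + 1) =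
      (X 2 + X 1) * trivEuler n +
        X 0 * X 1 *
          (pderiv 0 (trivEuler n) + pderiv 1 (trivEuler n) + pderiv 2 (trivEuler n)) := by
  obtain ⟨m, rfl⟩ : ∃ m, n = m + 1 := ⟨n - 1, by omega⟩
  calc trivEuler (m + 2)
      = ∑ σ : Equiv.Perm (Fin (m + 2)), wordWeight (permWord σ) (m + 1) :=
        trivEuler_eq_sum_wordWeight _
    _ = ∑ p : Equiv.Perm (Fin (m + 1)) × Fin (m + 2),
          wordWeight (permWord (insertMax p.1 p.2)) (m + 1) :=
        (Fintype.sum_bijective _ insertMax_bijective _ _ fun _ => rfl).symm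
    _ = ∑ π : Equiv.Perm (Fin (m + 1)),
          ((X 2 + X 1) * wordWeight (permWord π) m + xyDerivation (wordWeight (permWord π) m)) := by
        rw [Fintype.sum_prod_type]
        exact sum_congr rfl fun π _ => sum_wordWeight_insertMax π
    _ = _ := by
        rw [← xyDerivation_apply, trivEuler_eq_sum_wordWeight, map_sum, mul_sum, sum_add_distrib]
        rfl
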